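/- arXiv:2406.19723 — 3 statements merged into one kernel-verified Lean document; each statement's English description precedes it below -/
import Mathlib

section
/- (LIPO rejecting probability bound) Let X ⊆ ℝ^d be measurable with 0 < λ(X) < ∞, f : X → ℝ attaining its maximum and minimum, Δ = max_X f − min_X f, κ > 0, and μ the uniform probability measure on X (normalized Lebesgue measure). For any finite set A ⊆ X of cardinality t of previously evaluated points, the μ-measure of the set of points x ∈ X rejected by LIPO, i.e. satisfying min_{a∈A}(f(a) + κ‖x − a‖) < max_{a∈A} f(a), is at most t · π^{d/2} Δ^d / (κ^d Γ(d/2 + 1) λ(X)). -/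
open Metric MeasureTheory

theorem lipo_rejecting_probability
    {d : ℕ} (hd : 1 ≤ d) (X : Set (EuclideanSpace ℝ (Fin d)))
    (hXm : MeasurableSet X) (hX0 : 0 < volume X) (hXfin : volume X < ⊤)
    (f : EuclideanSpace ℝ (Fin d) → ℝ)
    (xM xm : EuclideanSpace ℝ (Fin d)) (hxM : xM ∈ X) (hxm : xm ∈ X)
    (hmax : ∀ y ∈ X, f y ≤ f xM) (hmin : ∀ y ∈ X, f xm ≤ f y)
    (Δ : ℝ) (hΔ : Δ = f xM - f xm)
    (κ : ℝ) (hκ : 0 < κ)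
    (A : Finset (EuclideanSpace ℝ (Fin d))) (hA : A.Nonempty)
    (hAX : (A : Set (EuclideanSpace ℝ (Fin d))) ⊆ X)
    (t : ℕ) (ht : t = A.card) :
    volume {x ∈ X | A.inf' hA (fun a => f a + κ * ‖x - a‖) < A.sup' hA f}
        / volume X ≤
      ENNReal.ofReal (t * Real.pi ^ ((d : ℝ) / 2) * Δ ^ d /
        (κ ^ d * Real.Gamma ((d : ℝ) / 2 + 1))) / volume X := by
  have hne : Nonempty (Fin d) := Fin.pos_iff_nonempty.mp hd
  apply ENNReal.div_le_div_right
  -- Step 1: the rejected set is contained in the union of balls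
  have hsub : {x ∈ X | A.inf' hA (fun a => f a + κ * ‖x - a‖) < A.sup' hA f} ⊆
      ⋃ a ∈ A, Metric.ball a (Δ / κ) := by
    rintro x ⟨hxX, hx⟩
    obtain ⟨a, haA, hainf⟩ := A.exists_mem_eq_inf' hA (fun a => f a + κ * ‖x - a‖)
    have hsup : A.sup' hA f ≤ f xM := Finset.sup'_le _ _ fun b hb => hmax b (hAX hb)
    have h1 : f a + κ * ‖x - a‖ < f xM := by
      rw [hainf] at hx
      exact lt_of_lt_of_le hx hsup
    have h2 : κ * ‖x - a‖ < Δ := by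
      have := hmin a (hAX haA)
      rw [hΔ]; linarith
    refine Set.mem_biUnion haA ?_
    rw [Metric.mem_ball, dist_eq_norm]
    rw [lt_div_iff₀ hκ, mul_comm]
    exact h2
  refine le_trans (measure_mono hsub) ?_
  refine le_trans (measure_biUnion_finset_le A _) (le_of_eq ?_)
  have hΔ0 : 0 ≤ Δ := by rw [hΔ]; linarith [hmin xM hxM]
  have hΓ : 0 < Real.Gamma ((d : ℝ) / 2 + 1) :=
    Real.Gamma_pos_of_pos (by positivity)
  have hball : ∀ a : EuclideanSpace ℝ (Fin d),
      volume (Metric.ball a (Δ / κ)) =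
        ENNReal.ofReal ((Δ / κ) ^ d * (Real.sqrt Real.pi ^ d / Real.Gamma ((d : ℝ) / 2 + 1))) := by
    intro a
    rw [EuclideanSpace.volume_ball (Fin d) a (Δ / κ)]
    rw [ENNReal.ofReal_mul (by positivity), ENNReal.ofReal_pow (by positivity)]
    simp [Fintype.card_fin]
  calc ∑ a ∈ A, volume (Metric.ball a (Δ / κ))
      = A.card * ENNReal.ofReal ((Δ / κ) ^ d *
          (Real.sqrt Real.pi ^ d / Real.Gamma ((d : ℝ) / 2 + 1))) := by
        rw [Finset.sum_congr rfl (fun a _ => hball a), Finset.sum_const, nsmul_eq_mul]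
    _ = ENNReal.ofReal ((A.card : ℝ) * ((Δ / κ) ^ d *
          (Real.sqrt Real.pi ^ d / Real.Gamma ((d : ℝ) / 2 + 1)))) := by
        rw [← ENNReal.ofReal_natCast A.card, ← ENNReal.ofReal_mul (by positivity)]
    _ = ENNReal.ofReal (t * Real.pi ^ ((d : ℝ) / 2) * Δ ^ d /
          (κ ^ d * Real.Gamma ((d : ℝ) / 2 + 1))) := by
        congr 1
        rw [ht]
        have hsq : Real.sqrt Real.pi ^ d = Real.pi ^ ((d : ℝ) / 2) := by
          rw [Real.sqrt_eq_rpow, ← Real.rpow_natCast (Real.pi ^ (1/2 : ℝ)) d,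
            ← Real.rpow_mul Real.pi_pos.le]
          ring_nf
        rw [hsq, div_pow]
        field_simp
end

section
/- Let f be κ-Lipschitz on a compact convex set X ⊆ ℝ^d with nonempty interior, let x* be a global maximizer of f, and let A ⊆ X be finite nonempty with current best value M_A = max_{a∈A} f(a). Then every point x of the closed ball B̄(x*, (f(x*) − M_A)/κ) ∩ X satisfies the LIPO acceptance condition min_{a∈A}(f(a) + κ‖x − a‖) ≥ M_A. -/
open Metric

theorem lipo_accepts_ball_around_maximizer
    {d : ℕ} (X : Set (EuclideanSpace ℝ (Fin d)))
    (hXc : IsCompact X) (hXconv : Convex ℝ X) (hXint : (interior X).Nonempty)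
    (f : EuclideanSpace ℝ (Fin d) → ℝ) (κ : ℝ) (hκ : 0 < κ)
    (hf : ∀ x ∈ X, ∀ y ∈ X, |f x - f y| ≤ κ * ‖x - y‖)
    (xstar : EuclideanSpace ℝ (Fin d)) (hxstar : xstar ∈ X)
    (hmax : ∀ y ∈ X, f y ≤ f xstar)
    (A : Finset (EuclideanSpace ℝ (Fin d))) (hA : A.Nonempty)
    (hAX : (A : Set (EuclideanSpace ℝ (Fin d))) ⊆ X) :
    ∀ x ∈ closedBall xstar ((f xstar - A.sup' hA f) / κ) ∩ X,
      A.sup' hA f ≤ A.inf' hA (fun a => f a + κ * ‖x - a‖) := by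
  rintro x ⟨hball, hxX⟩
  rw [mem_closedBall, dist_eq_norm, div_eq_mul_inv, ← div_eq_mul_inv,
    le_div_iff₀ hκ] at hball
  apply Finset.le_inf'
  intro a ha
  have haX : a ∈ X := hAX ha
  have h1 : f x - f a ≤ κ * ‖x - a‖ := (abs_le.mp (hf x hxX a haX)).2
  have h2 : f xstar - f x ≤ κ * ‖x - xstar‖ := by
    have := (abs_le.mp (hf xstar hxstar x hxX)).2
    rwa [norm_sub_rev] at this
  have h3 : ‖x - xstar‖ * κ ≤ f xstar - A.sup' hA f := hball
  nlinarith [mul_nonneg hκ.le (norm_nonneg (x - xstar))]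
end

section
/- Let f be κ-Lipschitz on X ⊆ ℝ^d with global maximum f* = max_X f, and let A ⊆ X be finite nonempty with best value M_A = max_{a∈A} f(a). If x ∈ X is rejected by LIPO, i.e. min_{a∈A}(f(a) + κ‖x − a‖) < M_A, then f(x) < M_A ≤ f*; that is, LIPO never rejects a point whose value exceeds the current best value. -/
theorem lipo_rejected_implies_value_below_best
    {d : ℕ} (X : Set (EuclideanSpace ℝ (Fin d)))
    (f : EuclideanSpace ℝ (Fin d) → ℝ) (κ : ℝ) (hκ : 0 < κ)
    (hf : ∀ x ∈ X, ∀ y ∈ X, |f x - f y| ≤ κ * ‖x - y‖)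
    (xstar : EuclideanSpace ℝ (Fin d)) (hxstar : xstar ∈ X)
    (hmax : ∀ y ∈ X, f y ≤ f xstar)
    (A : Finset (EuclideanSpace ℝ (Fin d))) (hA : A.Nonempty)
    (hAX : (A : Set (EuclideanSpace ℝ (Fin d))) ⊆ X)
    (x : EuclideanSpace ℝ (Fin d)) (hx : x ∈ X)
    (hrej : A.inf' hA (fun a => f a + κ * ‖x - a‖) < A.sup' hA f) :
    f x < A.sup' hA f ∧ A.sup' hA f ≤ f xstar := by
  constructor
  · obtain ⟨a, ha, hav⟩ := Finset.exists_mem_eq_inf' hA (fun a => f a + κ * ‖x - a‖)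
    have haX : a ∈ X := hAX ha
    have h1 : f x - f a ≤ κ * ‖x - a‖ := (abs_le.mp (hf x hx a haX)).2
    calc f x ≤ f a + κ * ‖x - a‖ := by linarith
    _ < A.sup' hA f := by rw [← hav]; exact hrej
  · obtain ⟨a, ha, hav⟩ := Finset.exists_mem_eq_sup' hA f
    rw [hav]; exact hmax a (hAX ha)
end
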